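/- arXiv:2312.11663 — 4 statements merged into one kernel-verified Lean document; each statement's English description precedes it below -/
import Mathlib

section
/- For every k ≥ 2 and every ε with 0 < ε < k(k−1)/2, there exist matrices Q, Q̂ ∈ 𝒬(k) (i.e., with q_{ji} = 1 − q_{ij} and q_{ii} = 1/2) such that ‖Q − Q̂‖_1 = ε, and every Kemeny ranking τ of Q and every Kemeny ranking τ̂ of Q̂ satisfy KT(τ, τ̂) = k(k−1)/2 (maximal Kendall-tau distance). -/
/-- Membership in 𝒬(k): entries in [0,1], `q i j + q j i = 1` for `i ≠ j`, diagonal `1/2`. -/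
def memQ {k : ℕ} (Q : Fin k → Fin k → ℝ) : Prop :=
  (∀ i j, 0 ≤ Q i j ∧ Q i j ≤ 1) ∧ (∀ i j, i ≠ j → Q i j + Q j i = 1) ∧ (∀ i, Q i i = 1/2)

/-- Kemeny score of the ranking `σ` (where `i ≻ j` iff `σ i < σ j`) w.r.t. matrix `Q`. -/
def KS {k : ℕ} (Q : Fin k → Fin k → ℝ) (σ : Equiv.Perm (Fin k)) : ℝ :=
  ∑ i : Fin k, ∑ j : Fin k, if σ i < σ j then Q j i else 0

/-- `σ` is a Kemeny ranking of `Q`: it minimises the Kemeny score. -/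
def IsKemeny {k : ℕ} (Q : Fin k → Fin k → ℝ) (σ : Equiv.Perm (Fin k)) : Prop :=
  ∀ τ : Equiv.Perm (Fin k), KS Q σ ≤ KS Q τ

/-- Entrywise 1-norm of the difference of two matrices. -/
def L1 {k : ℕ} (Q Q' : Fin k → Fin k → ℝ) : ℝ :=
  ∑ i : Fin k, ∑ j : Fin k, |Q i j - Q' i j|

/-- Kendall-tau distance between two rankings: number of pairs ranked oppositely. -/
def KT {k : ℕ} (σ τ : Equiv.Perm (Fin k)) : ℕ :=
  ∑ i : Fin k, ∑ j : Fin k, if σ i < σ j ∧ τ j < τ i then 1 else 0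

/- ### Auxiliary material -/

/-- The matrix `Q` from the construction. -/
noncomputable def Qm (k : ℕ) (δ : ℝ) : Fin k → Fin k → ℝ := fun i j =>
  if i < j then (1+δ)/2 else if j < i then (1-δ)/2 else 1/2

lemma perm_strictMono_eq_one {k : ℕ} (τ : Equiv.Perm (Fin k)) (h : StrictMono ⇑τ) : τ = 1 := by
  haveI : WellFoundedLT (Fin k) := inferInstance
  have h1 : StrictMono (⇑(1 : Equiv.Perm (Fin k))) := fun a b hab => hab
  have hr : Set.range ⇑τ = Set.range ⇑(1 : Equiv.Perm (Fin k)) := by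
    rw [Set.range_eq_univ.mpr τ.surjective,
        Set.range_eq_univ.mpr (Equiv.surjective (1 : Equiv.Perm (Fin k)))]
  exact Equiv.coe_fn_injective ((StrictMono.range_inj (β := Fin k) (γ := Fin k) h h1).1 hr)

lemma count_conc_invariant {k : ℕ} (σ : Equiv.Perm (Fin k)) :
    (∑ i : Fin k, ∑ j : Fin k, if σ i < σ j then (1:ℝ) else 0)
      = ∑ i : Fin k, ∑ j : Fin k, if i < j then (1:ℝ) else 0 := by
  rw [← Finset.sum_product' (f := fun i j => if σ i < σ j then (1:ℝ) else 0),
      ← Finset.sum_product' (f := fun i j => if i < j then (1:ℝ) else 0)]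
  exact Fintype.sum_equiv (σ.prodCongr σ) _ _ (fun p => rfl)

lemma KT_cast {k : ℕ} (σ τ : Equiv.Perm (Fin k)) :
    (KT σ τ : ℝ) = ∑ i : Fin k, ∑ j : Fin k,
      if σ i < σ j ∧ τ j < τ i then (1:ℝ) else 0 := by
  unfold KT
  push_cast
  rfl

lemma KS_Qm {k : ℕ} (δ : ℝ) (σ : Equiv.Perm (Fin k)) :
    KS (Qm k δ) σ = (1-δ)/2 * (∑ i : Fin k, ∑ j : Fin k, if i < j then (1:ℝ) else 0)
      + δ * (KT σ 1 : ℝ) := by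
  have key : ∀ i j : Fin k, (if σ i < σ j then Qm k δ j i else 0)
      = (1-δ)/2 * (if σ i < σ j then (1:ℝ) else 0)
        + δ * (if σ i < σ j ∧ (1 : Equiv.Perm (Fin k)) j < (1 : Equiv.Perm (Fin k)) i
            then (1:ℝ) else 0) := by
    intro i j
    by_cases hσ : σ i < σ j
    · have hne : i ≠ j := fun hc => lt_irrefl _ (hc ▸ hσ)
      rcases lt_trichotomy j i with h | h | h
      · simp only [Qm, Equiv.Perm.one_apply, if_pos h, if_pos hσ]
        simp only [hσ, h, and_self, ↓reduceIte]
        ring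
      · exact absurd h.symm hne
      · simp only [Qm, Equiv.Perm.one_apply, if_neg (asymm h), if_pos h, if_pos hσ]
        simp only [hσ, asymm h, and_false, ↓reduceIte]
        ring
    · simp [hσ]
  unfold KS
  simp only [key, Finset.sum_add_distrib, ← Finset.mul_sum]
  rw [count_conc_invariant σ, KT_cast]

lemma KS_Qm_transpose {k : ℕ} (δ : ℝ) (σ : Equiv.Perm (Fin k)) :
    KS (fun i j => Qm k δ j i) σ
      = (1+δ)/2 * (∑ i : Fin k, ∑ j : Fin k, if i < j then (1:ℝ) else 0)
        - δ * (KT σ 1 : ℝ) := by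
  have key : ∀ i j : Fin k, (if σ i < σ j then Qm k δ i j else 0)
      = (1+δ)/2 * (if σ i < σ j then (1:ℝ) else 0)
        - δ * (if σ i < σ j ∧ (1 : Equiv.Perm (Fin k)) j < (1 : Equiv.Perm (Fin k)) i
            then (1:ℝ) else 0) := by
    intro i j
    by_cases hσ : σ i < σ j
    · have hne : i ≠ j := fun hc => lt_irrefl _ (hc ▸ hσ)
      rcases lt_trichotomy j i with h | h | h
      · simp only [Qm, Equiv.Perm.one_apply, if_neg (asymm h), if_pos h, if_pos hσ]
        simp only [hσ, h, and_self, ↓reduceIte]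
        ring
      · exact absurd h.symm hne
      · simp only [Qm, Equiv.Perm.one_apply, if_pos h, if_pos hσ]
        simp only [hσ, asymm h, and_false, ↓reduceIte]
        ring
    · simp [hσ]
  unfold KS
  simp only [key, Finset.sum_sub_distrib, ← Finset.mul_sum]
  rw [count_conc_invariant σ, KT_cast]

lemma two_mul_count {k : ℕ} :
    2 * (∑ i : Fin k, ∑ j : Fin k, if i < j then (1:ℝ) else 0) = (k:ℝ) * (k:ℝ) - k := by
  have hswap : (∑ i : Fin k, ∑ j : Fin k, if i < j then (1:ℝ) else 0)
      = ∑ i : Fin k, ∑ j : Fin k, if j < i then (1:ℝ) else 0 := Finset.sum_comm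
  have hadd : (∑ i : Fin k, ∑ j : Fin k, if i < j then (1:ℝ) else 0)
      + (∑ i : Fin k, ∑ j : Fin k, if j < i then (1:ℝ) else 0)
      = ∑ i : Fin k, ∑ j : Fin k, if i = j then (0:ℝ) else 1 := by
    rw [← Finset.sum_add_distrib]
    refine Finset.sum_congr rfl fun i _ => ?_
    rw [← Finset.sum_add_distrib]
    refine Finset.sum_congr rfl fun j _ => ?_
    rcases lt_trichotomy i j with h | h | h
    · simp [h, asymm h, ne_of_lt h]
    · simp [h]
    · simp [h, asymm h, (ne_of_lt h).symm]
  have hinner : ∀ i : Fin k, (∑ j : Fin k, if i = j then (0:ℝ) else 1) = (k:ℝ) - 1 := by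
    intro i
    have : (∑ j : Fin k, if i = j then (0:ℝ) else 1)
        = ∑ j : Fin k, ((1:ℝ) - if i = j then 1 else 0) := by
      refine Finset.sum_congr rfl fun j _ => ?_
      split_ifs <;> ring
    rw [this, Finset.sum_sub_distrib, Finset.sum_const, Finset.sum_ite_eq]
    simp [Finset.card_univ]
  rw [two_mul]
  nth_rewrite 2 [hswap]
  rw [hadd, Finset.sum_congr rfl fun i _ => hinner i, Finset.sum_const, Finset.card_univ,
    Fintype.card_fin, nsmul_eq_mul]
  ring


lemma KT_one {k : ℕ} (σ : Equiv.Perm (Fin k)) :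
    KT σ (1 : Equiv.Perm (Fin k))
      = ∑ i : Fin k, ∑ j : Fin k, if σ i < σ j ∧ j < i then 1 else 0 := by
  unfold KT
  simp only [Equiv.Perm.one_apply]
  rfl

lemma one_le_KT_one {k : ℕ} (σ : Equiv.Perm (Fin k)) {i j : Fin k}
    (h : σ i < σ j ∧ j < i) : 1 ≤ KT σ 1 := by
  rw [KT_one]
  calc (1:ℕ) = if σ i < σ j ∧ j < i then 1 else 0 := (if_pos h).symm
    _ ≤ ∑ j' : Fin k, if σ i < σ j' ∧ j' < i then 1 else 0 :=
        Finset.single_le_sum (f := fun j' => if σ i < σ j' ∧ j' < i then 1 else 0)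
          (fun _ _ => Nat.zero_le _) (Finset.mem_univ j)
    _ ≤ ∑ i' : Fin k, ∑ j' : Fin k, if σ i' < σ j' ∧ j' < i' then 1 else 0 :=
        Finset.single_le_sum (f := fun i' => ∑ j' : Fin k, if σ i' < σ j' ∧ j' < i' then 1 else 0)
          (fun _ _ => Nat.zero_le _) (Finset.mem_univ i)

theorem stmt_3 (k : ℕ) (hk : 2 ≤ k) (ε : ℝ) (hε0 : 0 < ε)
    (hε1 : ε < (k : ℝ) * ((k : ℝ) - 1) / 2) :
    ∃ Q Qh : Fin k → Fin k → ℝ, memQ Q ∧ memQ Qh ∧ L1 Q Qh = ε ∧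
      ∀ τ τh : Equiv.Perm (Fin k), IsKemeny Q τ → IsKemeny Qh τh →
        (KT τ τh : ℝ) = (k : ℝ) * ((k : ℝ) - 1) / 2 := by
  have hk2 : (2:ℝ) ≤ (k:ℝ) := by exact_mod_cast hk
  have hkk : (0:ℝ) < (k:ℝ) * ((k:ℝ) - 1) := by nlinarith
  set δ : ℝ := ε / ((k:ℝ) * ((k:ℝ) - 1)) with hδdef
  have hδ0 : 0 < δ := div_pos hε0 hkk
  have hδ1 : δ < 1 := by
    rw [hδdef, div_lt_one hkk]; nlinarith
  set S : ℝ := ∑ i : Fin k, ∑ j : Fin k, if i < j then (1:ℝ) else 0 with hSdef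
  have hS2 : 2 * S = (k:ℝ) * (k:ℝ) - k := two_mul_count
  refine ⟨Qm k δ, fun i j => Qm k δ j i, ?_, ?_, ?_, ?_⟩
  · -- memQ Q
    refine ⟨fun i j => ?_, fun i j hij => ?_, fun i => ?_⟩
    · unfold Qm; split_ifs <;> constructor <;> linarith
    · rcases lt_trichotomy i j with h | h | h
      · show Qm k δ i j + Qm k δ j i = 1
        unfold Qm
        rw [if_pos h, if_neg (asymm h), if_pos h]; ring
      · exact absurd h hij
      · show Qm k δ i j + Qm k δ j i = 1
        unfold Qm
        rw [if_neg (asymm h), if_pos h, if_pos h]; ring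
    · simp [Qm]
  · -- memQ Qh
    refine ⟨fun i j => ?_, fun i j hij => ?_, fun i => ?_⟩
    · show 0 ≤ Qm k δ j i ∧ Qm k δ j i ≤ 1
      unfold Qm; split_ifs <;> constructor <;> linarith
    · show Qm k δ j i + Qm k δ i j = 1
      rcases lt_trichotomy i j with h | h | h
      · unfold Qm
        rw [if_neg (asymm h), if_pos h, if_pos h]; ring
      · exact absurd h hij
      · unfold Qm
        rw [if_pos h, if_neg (asymm h), if_pos h]; ring
    · simp [Qm]
  · -- L1
    unfold L1
    have hterm : ∀ i j : Fin k, |Qm k δ i j - Qm k δ j i| = if i = j then 0 else δ := by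
      intro i j
      rcases lt_trichotomy i j with h | h | h
      · unfold Qm
        rw [if_pos h, if_neg (asymm h), if_pos h, if_neg (ne_of_lt h)]
        have : (1+δ)/2 - (1-δ)/2 = δ := by ring
        rw [this, abs_of_nonneg hδ0.le]
      · simp [h]
      · unfold Qm
        rw [if_neg (asymm h), if_pos h, if_pos h, if_neg (ne_of_gt h)]
        have : (1-δ)/2 - (1+δ)/2 = -δ := by ring
        rw [this, abs_neg, abs_of_nonneg hδ0.le]
    have hinner : ∀ i : Fin k, (∑ j : Fin k, if i = j then (0:ℝ) else δ) = ((k:ℝ) - 1) * δ := by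
      intro i
      have : (∑ j : Fin k, if i = j then (0:ℝ) else δ)
          = ∑ j : Fin k, (δ - if i = j then δ else 0) := by
        refine Finset.sum_congr rfl fun j _ => ?_
        split_ifs <;> ring
      rw [this, Finset.sum_sub_distrib, Finset.sum_const, Finset.sum_ite_eq]
      simp [Finset.card_univ]
      ring
    rw [Finset.sum_congr rfl fun i _ => Finset.sum_congr rfl fun j _ => hterm i j,
        Finset.sum_congr rfl fun i _ => hinner i, Finset.sum_const, Finset.card_univ,
        Fintype.card_fin, nsmul_eq_mul, hδdef]
    field_simp
    have ha : ((k:ℝ) - 1) ≠ 0 := by linarith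
    exact div_self ha
  · -- Kemeny rankings
    intro τ τh hKτ hKτh
    -- τ is the identity (or at least strictly monotone)
    have hKS1 := hKτ 1
    rw [KS_Qm, KS_Qm] at hKS1
    have hKT11 : KT (1 : Equiv.Perm (Fin k)) 1 = 0 := by
      rw [KT_one]
      refine Finset.sum_eq_zero fun i _ => Finset.sum_eq_zero fun j _ => ?_
      rw [if_neg]
      rintro ⟨h1, h2⟩
      exact absurd (h1.trans h2) (lt_irrefl _)
    rw [hKT11] at hKS1
    have hτcast : (KT τ 1 : ℝ) ≤ 0 := by nlinarith
    have hτ0 : KT τ 1 = 0 := by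
      have h0 : (KT τ 1 : ℝ) = 0 := le_antisymm hτcast (by positivity)
      exact_mod_cast h0
    have hmono : StrictMono ⇑τ := by
      intro a b hab
      by_contra hc
      have hne : τ b ≠ τ a := fun hh => (ne_of_lt hab).symm (τ.injective hh)
      have hlt : τ b < τ a := lt_of_le_of_ne (le_of_not_gt hc) hne
      have := one_le_KT_one τ ⟨hlt, hab⟩
      omega
    have hτ1 : τ = 1 := perm_strictMono_eq_one τ hmono
    -- τh reverses every pair
    have hKSr := hKτh Fin.revPerm
    rw [KS_Qm_transpose, KS_Qm_transpose] at hKSr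
    have hrevKT : KT (Fin.revPerm : Equiv.Perm (Fin k)) 1
        = ∑ i : Fin k, ∑ j : Fin k, if j < i then 1 else 0 := by
      rw [KT_one]
      refine Finset.sum_congr rfl fun i _ => Finset.sum_congr rfl fun j _ => ?_
      simp [Fin.rev_lt_rev]
    have hgecast : (KT (Fin.revPerm : Equiv.Perm (Fin k)) 1 : ℝ) ≤ (KT τh 1 : ℝ) := by
      nlinarith
    have hge : (∑ i : Fin k, ∑ j : Fin k, if j < i then 1 else 0) ≤ KT τh 1 := by
      rw [← hrevKT]; exact_mod_cast hgecast
    have htermle : ∀ i j : Fin k,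
        (if τh i < τh j ∧ j < i then 1 else 0) ≤ (if j < i then 1 else 0) := by
      intro i j
      split_ifs with h1 h2
      · exact le_rfl
      · exact absurd h1.2 h2
      · exact Nat.zero_le _
      · exact le_rfl
    have hinnerle : ∀ i : Fin k,
        (∑ j : Fin k, if τh i < τh j ∧ j < i then 1 else 0)
          ≤ ∑ j : Fin k, if j < i then 1 else 0 :=
      fun i => Finset.sum_le_sum fun j _ => htermle i j
    have hle : KT τh 1 ≤ ∑ i : Fin k, ∑ j : Fin k, if j < i then 1 else 0 := by
      rw [KT_one]
      exact Finset.sum_le_sum fun i _ => hinnerle i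
    have heq : (∑ i : Fin k, ∑ j : Fin k, if τh i < τh j ∧ j < i then 1 else 0)
        = ∑ i : Fin k, ∑ j : Fin k, if j < i then 1 else 0 := by
      rw [← KT_one]; omega
    have houter := (Finset.sum_eq_sum_iff_of_le (fun i _ => hinnerle i)).1 heq
    have hanti : ∀ i j : Fin k, j < i → τh i < τh j := by
      intro i j hji
      have h := (Finset.sum_eq_sum_iff_of_le (fun j' _ => htermle i j')).1
        (houter i (Finset.mem_univ i)) j (Finset.mem_univ j)
      rw [if_pos hji] at h
      by_contra hc
      rw [if_neg (fun hcon => hc hcon.1)] at h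
      omega
    -- conclude
    subst hτ1
    rw [KT_cast]
    have hfin : (∑ i : Fin k, ∑ j : Fin k,
        if (1 : Equiv.Perm (Fin k)) i < (1 : Equiv.Perm (Fin k)) j ∧ τh j < τh i
        then (1:ℝ) else 0) = S := by
      rw [hSdef]
      refine Finset.sum_congr rfl fun i _ => Finset.sum_congr rfl fun j _ => ?_
      simp only [Equiv.Perm.one_apply]
      by_cases h : i < j
      · simp only [h, hanti j i h, and_self, ↓reduceIte]
      · simp only [h, false_and, ↓reduceIte]
    rw [hfin]
    linarith
end

section
/- Let Q, Q̂ ∈ 𝒬(k) and C ∈ ℝ^{k×k} be such that q_{ij} ∈ [q̂_{ij} − c_{ji}, q̂_{ij} + c_{ij}] for all distinct i, j ∈ [k]. Let τ be a Kemeny ranking of Q and τ̂ a Kemeny ranking of Q̂ + C. Then KS(Q, τ̂) − KS(Q, τ) ≤ Σ_{1 ≤ i < j ≤ k} (c_{ij} + c_{ji}). -/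
/-- For a "tournament" relation `p` and symmetric `g`, the sum over `p`-pairs is half the
off-diagonal sum. -/
lemma tourn_sum {k : ℕ} (p : Fin k → Fin k → Prop) [∀ i j, Decidable (p i j)]
    (hp : ∀ i j : Fin k, i ≠ j → (p i j ↔ ¬ p j i)) (hd : ∀ i, ¬ p i i)
    (g : Fin k → Fin k → ℝ) (hg : ∀ i j, g i j = g j i) :
    (∑ i : Fin k, ∑ j : Fin k, if p i j then g i j else 0)
      = (∑ i : Fin k, ∑ j : Fin k, if i ≠ j then g i j else 0) / 2 := by
  have hswap : (∑ i : Fin k, ∑ j : Fin k, if p i j then g i j else 0)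
      = ∑ i : Fin k, ∑ j : Fin k, if p j i then g i j else 0 := by
    rw [Finset.sum_comm]
    exact Finset.sum_congr rfl fun i _ => Finset.sum_congr rfl fun j _ => by
      by_cases h : p j i <;> simp [h, hg]
  have h2 : (∑ i : Fin k, ∑ j : Fin k, if p j i then g i j else 0)
      + (∑ i : Fin k, ∑ j : Fin k, if p i j then g i j else 0)
      = ∑ i : Fin k, ∑ j : Fin k, if i ≠ j then g i j else 0 := by
    rw [← Finset.sum_add_distrib]
    refine Finset.sum_congr rfl fun i _ => ?_
    rw [← Finset.sum_add_distrib]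
    refine Finset.sum_congr rfl fun j _ => ?_
    by_cases hij : i = j
    · subst hij; simp [hd i]
    · by_cases h : p i j
      · have h' : ¬ p j i := (hp i j hij).mp h
        simp [h, h', hij]
      · have h' : p j i := not_not.mp (fun hn => h ((hp i j hij).mpr hn))
        simp [h, h', hij]
  linarith
theorem stmt_7 {k : ℕ} (Q Qh : Fin k → Fin k → ℝ) (hQ : memQ Q) (hQh : memQ Qh)
    (C : Fin k → Fin k → ℝ)
    (hconf : ∀ i j : Fin k, i ≠ j → Qh i j - C j i ≤ Q i j ∧ Q i j ≤ Qh i j + C i j)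
    (τ τh : Equiv.Perm (Fin k)) (hτ : IsKemeny Q τ)
    (hτh : IsKemeny (fun i j => Qh i j + C i j) τh) :
    KS Q τh - KS Q τ ≤ ∑ i : Fin k, ∑ j : Fin k,
      (if i < j then C i j + C j i else 0) := by
  set M : Fin k → Fin k → ℝ := fun i j => Qh i j + C i j with hM
  have hne : ∀ (σ : Equiv.Perm (Fin k)) (i j : Fin k), σ i < σ j → i ≠ j := by
    intro σ i j h hij; subst hij; exact lt_irrefl _ h
  have h1 : KS Q τh ≤ KS M τh := by
    unfold KS
    refine Finset.sum_le_sum fun i _ => Finset.sum_le_sum fun j _ => ?_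
    split_ifs with h
    · exact (hconf j i (hne τh i j h).symm).2
    · exact le_rfl
  have h2 : KS M τh ≤ KS M τ := hτh τ
  have h3 : KS M τ ≤ KS Q τ + ∑ i : Fin k, ∑ j : Fin k,
      (if τ i < τ j then C i j + C j i else 0) := by
    unfold KS
    rw [← Finset.sum_add_distrib]
    refine Finset.sum_le_sum fun i _ => ?_
    rw [← Finset.sum_add_distrib]
    refine Finset.sum_le_sum fun j _ => ?_
    split_ifs with h
    · have hij := hne τ i j h
      have := (hconf j i hij.symm).1
      simp only [hM]; linarith
    · simp
  have hgsym : ∀ i j : Fin k, C i j + C j i = C j i + C i j := fun i j => add_comm _ _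
  have e1 := tourn_sum (fun i j => τ i < τ j)
    (fun i j hij => ⟨fun h => asymm h,
      fun h => lt_of_le_of_ne (not_lt.mp h) fun he => hij (τ.injective he)⟩)
    (fun i => lt_irrefl _) (fun i j => C i j + C j i) hgsym
  have e2 := tourn_sum (fun i j : Fin k => i < j)
    (fun i j hij => ⟨fun h => asymm h, fun h => lt_of_le_of_ne (not_lt.mp h) hij⟩)
    (fun i => lt_irrefl _) (fun i j => C i j + C j i) hgsym
  linarith
end

section
/- Let Q, Q̂ ∈ 𝒬(k) be such that q_{ij} ∈ [q̂_{ij} − c_{ji}, q̂_{ij} + c_{ij}] for all distinct i, j ∈ [k], where C ∈ ℝ_{≥0}^{k×k}. Let τ be a Kemeny ranking of Q and τ̂ a Kemeny ranking of Q̂. Then KS(Q, τ̂) − KS(Q, τ) ≤ 2·Σ_{1 ≤ i < j ≤ k} max(c_{ij}, c_{ji}). -/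
lemma sum_sym_perm {k : ℕ} (M : Fin k → Fin k → ℝ) (hM : ∀ i j, M i j = M j i)
    (σ : Equiv.Perm (Fin k)) :
    ∑ i : Fin k, ∑ j : Fin k, (if σ i < σ j then M i j else 0)
      = ∑ i : Fin k, ∑ j : Fin k, (if i < j then M i j else 0) := by
  have gen : ∀ (f : Fin k → Fin k), Function.Injective f →
      (2:ℝ) * ∑ i : Fin k, ∑ j : Fin k, (if f i < f j then M i j else 0)
        = ∑ i : Fin k, ∑ j : Fin k, (if i ≠ j then M i j else 0) := by
    intro f hf
    have hswap : ∑ i : Fin k, ∑ j : Fin k, (if f i < f j then M i j else 0)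
        = ∑ i : Fin k, ∑ j : Fin k, (if f j < f i then M i j else 0) := by
      rw [Finset.sum_comm]
      exact Finset.sum_congr rfl fun i _ => Finset.sum_congr rfl fun j _ => by rw [hM]
    rw [two_mul]
    nth_rewrite 2 [hswap]
    rw [← Finset.sum_add_distrib]
    refine Finset.sum_congr rfl fun i _ => ?_
    rw [← Finset.sum_add_distrib]
    refine Finset.sum_congr rfl fun j _ => ?_
    by_cases h : i = j
    · subst h; simp
    · have hne : f i ≠ f j := fun he => h (hf he)
      rcases lt_trichotomy (f i) (f j) with h1 | h1 | h1
      · simp [h1, not_lt_of_gt h1, h]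
      · exact absurd h1 hne
      · simp [h1, not_lt_of_gt h1, h]
  have h1 := gen σ σ.injective
  have h2 := gen id Function.injective_id
  simp only [id] at h2
  exact mul_left_cancel₀ two_ne_zero (h1.trans h2.symm)

lemma ks_close {k : ℕ} (Q Qh : Fin k → Fin k → ℝ) (C : Fin k → Fin k → ℝ)
    (hconf : ∀ i j : Fin k, i ≠ j → Qh i j - C j i ≤ Q i j ∧ Q i j ≤ Qh i j + C i j)
    (σ : Equiv.Perm (Fin k)) :
    |KS Q σ - KS Qh σ| ≤ ∑ i : Fin k, ∑ j : Fin k,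
      (if i < j then max (C i j) (C j i) else 0) := by
  have h1 : KS Q σ - KS Qh σ
      = ∑ i : Fin k, ∑ j : Fin k, (if σ i < σ j then Q j i - Qh j i else 0) := by
    unfold KS
    rw [← Finset.sum_sub_distrib]
    refine Finset.sum_congr rfl fun i _ => ?_
    rw [← Finset.sum_sub_distrib]
    refine Finset.sum_congr rfl fun j _ => ?_
    split <;> simp
  rw [h1, ← sum_sym_perm (fun i j => max (C i j) (C j i)) (fun i j => max_comm _ _) σ]
  calc |∑ i : Fin k, ∑ j : Fin k, (if σ i < σ j then Q j i - Qh j i else 0)|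
      ≤ ∑ i : Fin k, |∑ j : Fin k, (if σ i < σ j then Q j i - Qh j i else 0)| :=
        Finset.abs_sum_le_sum_abs _ _
    _ ≤ ∑ i : Fin k, ∑ j : Fin k, |if σ i < σ j then Q j i - Qh j i else 0| :=
        Finset.sum_le_sum fun i _ => Finset.abs_sum_le_sum_abs _ _
    _ ≤ ∑ i : Fin k, ∑ j : Fin k, (if σ i < σ j then max (C i j) (C j i) else 0) := by
        refine Finset.sum_le_sum fun i _ => Finset.sum_le_sum fun j _ => ?_
        split
        · next hlt =>
          have hij : i ≠ j := fun he => by subst he; exact lt_irrefl _ hlt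
          obtain ⟨hl, hr⟩ := hconf j i hij.symm
          refine abs_le.mpr ⟨?_, ?_⟩
          · have : -(C i j) ≤ Q j i - Qh j i := by linarith
            calc -max (C i j) (C j i) ≤ -(C i j) := neg_le_neg (le_max_left _ _)
              _ ≤ Q j i - Qh j i := this
          · calc Q j i - Qh j i ≤ C j i := by linarith
              _ ≤ max (C i j) (C j i) := le_max_right _ _
        · simp

theorem stmt_8 {k : ℕ} (Q Qh : Fin k → Fin k → ℝ) (hQ : memQ Q) (hQh : memQ Qh)
    (C : Fin k → Fin k → ℝ) (hC : ∀ i j, 0 ≤ C i j)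
    (hconf : ∀ i j : Fin k, i ≠ j → Qh i j - C j i ≤ Q i j ∧ Q i j ≤ Qh i j + C i j)
    (τ τh : Equiv.Perm (Fin k)) (hτ : IsKemeny Q τ) (hτh : IsKemeny Qh τh) :
    KS Q τh - KS Q τ ≤ 2 * ∑ i : Fin k, ∑ j : Fin k,
      (if i < j then max (C i j) (C j i) else 0) := by
  have hb1 := abs_le.mp (ks_close Q Qh C hconf τh)
  have hb2 := abs_le.mp (ks_close Q Qh C hconf τ)
  have hmid := hτh τ
  linarith [hb1.2, hb2.1]
end

section
/- Suppose Q ∈ [0,1]^{k×k} satisfies the triangle inequality q_{il} + q_{lj} ≥ q_{ij} for all pairwise distinct i, j, l, and also q_{ij} + q_{ji} = 1 and q̂_{ij} + q̂_{ji} = 1, and q_{ij} ∈ [q̂_{ij} − c_{ji}, q̂_{ij} + c_{ij}] for all i ≠ j. Define ċ_{ij} := min(c_{ij}, min_{l ≠ i,j} (q̂_{il} + c_{il} + q̂_{lj} + c_{lj} − q̂_{ij})). Then q_{ij} ∈ [q̂_{ij} − ċ_{ji}, q̂_{ij} + ċ_{ij}] for all i ≠ j. (Pruning by triangle inequality) 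-/
/-- Pruning confidence intervals by the triangle inequality. -/
theorem stmt_18 {k : ℕ} (hk : 3 ≤ k) (Q Qh c : Fin k → Fin k → ℝ)
    (hQ01 : ∀ i j, 0 ≤ Q i j ∧ Q i j ≤ 1)
    (htri : ∀ i j l : Fin k, i ≠ j → j ≠ l → i ≠ l → Q i j ≤ Q i l + Q l j)
    (hQs : ∀ i j, i ≠ j → Q i j + Q j i = 1)
    (hQhs : ∀ i j, i ≠ j → Qh i j + Qh j i = 1)
    (hconf : ∀ i j : Fin k, i ≠ j → Qh i j - c j i ≤ Q i j ∧ Q i j ≤ Qh i j + c i j)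
    (cdot : Fin k → Fin k → ℝ)
    (hcdot : ∀ i j, cdot i j =
      min (c i j)
        (sInf {v : ℝ | ∃ l : Fin k, l ≠ i ∧ l ≠ j ∧
          v = Qh i l + c i l + Qh l j + c l j - Qh i j})) :
    ∀ i j : Fin k, i ≠ j → Qh i j - cdot j i ≤ Q i j ∧ Q i j ≤ Qh i j + cdot i j := by
  have key : ∀ i j : Fin k, i ≠ j → Q i j - Qh i j ≤ cdot i j := by
    intro i j hij
    obtain ⟨l0, hl0i, hl0j⟩ : ∃ l : Fin k, l ≠ i ∧ l ≠ j := by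
      by_contra h
      push_neg at h
      have hsub : (Finset.univ : Finset (Fin k)) ⊆ {i, j} := by
        intro x _
        by_cases hx : x = i
        · simp [hx]
        · simp [h x hx]
      have := Finset.card_le_card hsub
      have h2 : ({i, j} : Finset (Fin k)).card ≤ 2 :=
        (Finset.card_insert_le _ _).trans (by simp)
      simp [Fintype.card_fin] at this
      omega
    rw [hcdot]
    apply le_min
    · linarith [(hconf i j hij).2]
    · have hne : {v : ℝ | ∃ l : Fin k, l ≠ i ∧ l ≠ j ∧
          v = Qh i l + c i l + Qh l j + c l j - Qh i j}.Nonempty :=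
        ⟨_, l0, hl0i, hl0j, rfl⟩
      apply le_csInf hne
      rintro v ⟨l, hli, hlj, rfl⟩
      have h1 := (hconf i l (Ne.symm hli)).2
      have h2 := (hconf l j hlj).2
      have h3 := htri i j l hij (Ne.symm hlj) (Ne.symm hli)
      linarith
  intro i j hij
  constructor
  · have h := key j i hij.symm
    have s1 := hQs i j hij
    have s2 := hQhs i j hij
    linarith
  · have h := key i j hij
    linarith
end
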